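/- arXiv:2107.14547 — 5 statements merged into one kernel-verified Lean document; each statement's English description precedes it below -/
import Mathlib

section
/- Let Z be a complex vector space with a conjugate-linear involution z ↦ z* and a convex cone Z⁺ of selfadjoint elements that is strict (Z⁺ ∩ −Z⁺ = {0}), endowed with a Hausdorff locally convex topology under which the involution is continuous and whose topology is generated by a family of increasing seminorms, but with Z⁺ not assumed closed. Then the closure cl(Z⁺) of Z⁺ is again a convex cone, it consists of selfadjoint elements, it is strict (cl(Z⁺) ∩ −cl(Z⁺) = {0}), and every continuous seminorm on Z that is increasing with respect to Z⁺ is increasing with respect to cl(Z⁺); consequently (Z, cl(Z⁺)) is a topologically ordered *-space. -/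
open scoped ComplexConjugate Topology

/-- The data of an ordered `*`-space structure on a complex vector space `Z`:
a conjugate-linear involution and a strict convex cone of selfadjoint elements. -/
structure OrderedStarData (Z : Type*) [AddCommGroup Z] [Module ℂ Z] where
  star : Z → Z
  star_add : ∀ x y : Z, star (x + y) = star x + star y
  star_smul : ∀ (c : ℂ) (x : Z), star (c • x) = (starRingEnd ℂ) c • star x
  star_star : ∀ x : Z, star (star x) = x
  cone : Set Z
  cone_zero : (0 : Z) ∈ cone
  cone_add : ∀ x ∈ cone, ∀ y ∈ cone, x + y ∈ cone
  cone_smul : ∀ r : ℝ, 0 ≤ r → ∀ x ∈ cone, (r : ℂ) • x ∈ cone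
  cone_strict : ∀ x ∈ cone, -x ∈ cone → x = 0
  cone_star : ∀ x ∈ cone, star x = x

namespace OrderedStarData

variable {Z : Type*} [AddCommGroup Z] [Module ℂ Z]

/-- A seminorm is increasing when `0 ≤ x ≤ y` implies `p x ≤ p y`. -/
def Increasing (D : OrderedStarData Z) (p : Seminorm ℂ Z) : Prop :=
  ∀ x y : Z, x ∈ D.cone → y - x ∈ D.cone → p x ≤ p y

/-- A `*`-seminorm: `p (z*) = p z`. -/
def StarSeminorm (D : OrderedStarData Z) (p : Seminorm ℂ Z) : Prop :=
  ∀ z : Z, p (D.star z) = p z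

end OrderedStarData

/-- A topologically ordered `*`-space: an ordered `*`-space with a Hausdorff locally convex
topology generated by a family of increasing seminorms, continuous involution and closed cone. -/
structure TopOrderedStarSpace (Z : Type*) [AddCommGroup Z] [Module ℂ Z]
    [TopologicalSpace Z] extends OrderedStarData Z where
  t2 : T2Space Z
  star_continuous : Continuous star
  cone_closed : IsClosed cone
  seminorms_generate : ∃ (ι : Type) (hι : Nonempty ι) (q : ι → Seminorm ℂ Z),
      (∀ i, ∀ x y : Z, x ∈ cone → y - x ∈ cone → q i x ≤ q i y) ∧
      (letI := hι; WithSeminorms q)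

namespace TopOrderedStarSpace

variable {Z : Type*} [AddCommGroup Z] [Module ℂ Z] [TopologicalSpace Z]

/-- Membership in `S_*(Z)`, the set of continuous increasing `*`-seminorms. -/
def MemSStar (D : TopOrderedStarSpace Z) (p : Seminorm ℂ Z) : Prop :=
  Continuous ⇑p ∧ D.toOrderedStarData.Increasing p ∧ D.toOrderedStarData.StarSeminorm p

end TopOrderedStarSpace

/-- The topology of `Z` is generated by the family of seminorms `S`. -/
def GeneratesTopology {Z : Type*} [AddCommGroup Z] [Module ℂ Z] [TopologicalSpace Z]
    (S : Set (Seminorm ℂ Z)) : Prop :=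
  ∃ h : Nonempty ↥S, letI := h; WithSeminorms (fun p : ↥S => (p : Seminorm ℂ Z))

/-- A `Z`-valued gramian (vector valued inner product) on `E`, making `E` a VE-space over `Z`. -/
structure Gramian {Z : Type*} [AddCommGroup Z] [Module ℂ Z] (D : OrderedStarData Z)
    (E : Type*) [AddCommGroup E] [Module ℂ E] where
  inner : E → E → Z
  inner_self_mem : ∀ x : E, inner x x ∈ D.cone
  inner_self_eq_zero : ∀ x : E, inner x x = 0 → x = 0
  inner_herm : ∀ x y : E, inner x y = D.star (inner y x)
  inner_add_right : ∀ x y₁ y₂ : E, inner x (y₁ + y₂) = inner x y₁ + inner x y₂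
  inner_smul_right : ∀ (a : ℂ) (x y : E), inner x (a • y) = a • inner x y

namespace Gramian

variable {Z : Type*} [AddCommGroup Z] [Module ℂ Z] {D : OrderedStarData Z}
  {E : Type*} [AddCommGroup E] [Module ℂ E]
  {F : Type*} [AddCommGroup F] [Module ℂ F]

/-- The seminorm `p̃ x = p ([x,x])^{1/2}` induced on a VE-space by a seminorm on `Z`. -/
noncomputable def tilde (B : Gramian D E) (p : Seminorm ℂ Z) (x : E) : ℝ :=
  Real.sqrt (p (B.inner x x))

/-- `S` is an adjoint of `T` : `[Tx, y] = [x, Sy]`. -/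
def IsAdjoint (BE : Gramian D E) (BF : Gramian D F) (T : E →ₗ[ℂ] F) (S : F →ₗ[ℂ] E) : Prop :=
  ∀ (x : E) (y : F), BF.inner (T x) y = BE.inner x (S y)

/-- `T` is adjointable. -/
def Adjointable (BE : Gramian D E) (BF : Gramian D F) (T : E →ₗ[ℂ] F) : Prop :=
  ∃ S : F →ₗ[ℂ] E, BE.IsAdjoint BF T S

/-- `T` is bounded for the seminorm `p` : `p̃ (Tx) ≤ C p̃ x`. -/
def BoundedFor (BE : Gramian D E) (BF : Gramian D F) (T : E →ₗ[ℂ] F) (p : Seminorm ℂ Z) : Prop :=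
  ∃ C : ℝ, 0 ≤ C ∧ ∀ x : E, BF.tilde p (T x) ≤ C * BE.tilde p x

/-- The operator seminorm `p̄ T`, the infimum of the admissible bounds. -/
noncomputable def opSeminorm (BE : Gramian D E) (BF : Gramian D F) (T : E →ₗ[ℂ] F)
    (p : Seminorm ℂ Z) : ℝ :=
  sInf {C : ℝ | 0 ≤ C ∧ ∀ x : E, BF.tilde p (T x) ≤ C * BE.tilde p x}

/-- The topology of `E` is the one of a topological VE-space: it is generated by the
seminorms `p̃` for `p ∈ S`. -/
def IsVETopology [TopologicalSpace E] (B : Gramian D E) (S : Set (Seminorm ℂ Z)) : Prop :=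
  ∃ h : Nonempty ↥S, letI := h;
    ∃ q : ↥S → Seminorm ℂ E, (∀ (p : ↥S) (x : E), q p x = B.tilde p.1 x) ∧ WithSeminorms q

end Gramian

/-- A barrel: a closed, absorbent, balanced, convex set. -/
def IsBarrel {E : Type*} [AddCommGroup E] [Module ℂ E] [TopologicalSpace E] (s : Set E) : Prop :=
  IsClosed s ∧ Absorbent ℂ s ∧ Balanced ℂ s ∧ Convex ℝ s

/-- A (complex) topological vector space is barrelled if every barrel is a neighbourhood of `0`. -/
def BarrelledSp (E : Type*) [AddCommGroup E] [Module ℂ E] [TopologicalSpace E] : Prop :=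
  ∀ s : Set E, IsBarrel s → s ∈ 𝓝 (0 : E)

/-- A barrel with respect to the topology of a norm function `N`. -/
def IsBarrelWrtNorm {V : Type*} [AddCommGroup V] [Module ℂ V] (N : V → ℝ) (s : Set V) : Prop :=
  (∀ x : V, (∀ ε : ℝ, 0 < ε → ∃ y ∈ s, N (x - y) < ε) → x ∈ s) ∧
  Absorbent ℂ s ∧ Balanced ℂ s ∧ Convex ℝ s

/-- Barrelledness with respect to the topology of a norm function `N`. -/
def BarrelledWrtNorm {V : Type*} [AddCommGroup V] [Module ℂ V] (N : V → ℝ) : Prop :=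
  ∀ s : Set V, IsBarrelWrtNorm N s → ∃ ε : ℝ, 0 < ε ∧ ∀ x : V, N x < ε → x ∈ s

/-- The kernel of a seminorm, as a submodule. -/
def semKer {Z : Type*} [AddCommGroup Z] [Module ℂ Z] (p : Seminorm ℂ Z) : Submodule ℂ Z where
  carrier := {z | p z = 0}
  add_mem' := by
    intro a b ha hb
    simp only [Set.mem_setOf_eq] at ha hb ⊢
    exact le_antisymm ((map_add_le_add p a b).trans (by simp [ha, hb])) (apply_nonneg p _)
  zero_mem' := map_zero p
  smul_mem' := by
    intro c x hx
    simp only [Set.mem_setOf_eq] at hx ⊢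
    rw [map_smul_eq_mul, hx, mul_zero]

/-!
The closure of a convex cone is a convex cone, and selfadjointness passes to it because the
involution is continuous. The only substantial point is strictness: the increasing property
`p x ≤ p (x + y)` of a continuous seminorm is a closed condition, so it survives passing to the
closure; then `x, -x ∈ cl(Z⁺)` gives `p x ≤ p (x - x) = 0` for every generating seminorm `p`, and
Hausdorffness forces `x = 0`.
-/

namespace Seminorm

variable {𝕜 Z : Type*} [NormedField 𝕜] [AddCommGroup Z] [Module 𝕜 Z]

def IsIncreasingOn (p : Seminorm 𝕜 Z) (C : Set Z) : Prop :=
  ∀ x ∈ C, ∀ y ∈ C, p x ≤ p (x + y)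

namespace IsIncreasingOn

variable {p : Seminorm 𝕜 Z} {C : Set Z}

theorem le_of_sub_mem (hp : p.IsIncreasingOn C) {x y : Z} (hx : x ∈ C) (hyx : y - x ∈ C) :
    p x ≤ p y := by
  simpa using hp x hx (y - x) hyx

theorem eq_zero_of_neg_mem (hp : p.IsIncreasingOn C) {x : Z} (hx : x ∈ C) (hnx : -x ∈ C) :
    p x = 0 :=
  le_antisymm (by simpa using hp x hx (-x) hnx) (apply_nonneg p x)

theorem closure [TopologicalSpace Z] [ContinuousAdd Z] (hp : p.IsIncreasingOn C)
    (hcont : Continuous p) : p.IsIncreasingOn (_root_.closure C) := by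
  intro x hx y hy
  have hclosed : IsClosed {z : Z × Z | p z.1 ≤ p (z.1 + z.2)} :=
    isClosed_le (hcont.comp continuous_fst) (hcont.comp continuous_add)
  have hsub : _root_.closure (C ×ˢ C) ⊆ {z : Z × Z | p z.1 ≤ p (z.1 + z.2)} :=
    closure_minimal (fun z hz => hp z.1 hz.1 z.2 hz.2) hclosed
  rw [closure_prod_eq] at hsub
  exact hsub (Set.mk_mem_prod hx hy)

end IsIncreasingOn

end Seminorm

theorem WithSeminorms.eq_zero_of_mem_of_neg_mem {𝕜 Z ι : Type*} [NormedField 𝕜]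
    [AddCommGroup Z] [Module 𝕜 Z] [TopologicalSpace Z] [T1Space Z] [Nonempty ι]
    {q : SeminormFamily 𝕜 Z ι} (hq : WithSeminorms q) {C : Set Z}
    (hinc : ∀ i, (q i).IsIncreasingOn C) {x : Z} (hx : x ∈ C) (hnx : -x ∈ C) : x = 0 := by
  by_contra hne
  obtain ⟨i, hi⟩ := hq.separating_of_T1 x hne
  exact hi ((hinc i).eq_zero_of_neg_mem hx hnx)

theorem statement0_general {Z : Type*} [AddCommGroup Z] [Module ℂ Z] [TopologicalSpace Z]
    (st : Z → Z)
    (st_add : ∀ x y : Z, st (x + y) = st x + st y)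
    (st_smul : ∀ (c : ℂ) (x : Z), st (c • x) = (starRingEnd ℂ) c • st x)
    (st_st : ∀ x : Z, st (st x) = x)
    (C : Set Z)
    (hC0 : (0 : Z) ∈ C)
    (hCadd : ∀ x ∈ C, ∀ y ∈ C, x + y ∈ C)
    (hCsmul : ∀ r : ℝ, 0 ≤ r → ∀ x ∈ C, (r : ℂ) • x ∈ C)
    (hCst : ∀ x ∈ C, st x = x)
    (ht2 : T2Space Z)
    (hstc : Continuous st)
    (hgen : ∃ (ι : Type) (hι : Nonempty ι) (q : ι → Seminorm ℂ Z),
      (∀ i, ∀ x ∈ C, ∀ y ∈ C, q i x ≤ q i (x + y)) ∧ (letI := hι; WithSeminorms q)) :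
    (∀ x ∈ closure C, ∀ y ∈ closure C, x + y ∈ closure C) ∧
    (∀ r : ℝ, 0 ≤ r → ∀ x ∈ closure C, (r : ℂ) • x ∈ closure C) ∧
    (∀ x ∈ closure C, st x = x) ∧
    (∀ x ∈ closure C, -x ∈ closure C → x = 0) ∧
    (∀ p : Seminorm ℂ Z, Continuous ⇑p → (∀ x ∈ C, ∀ y ∈ C, p x ≤ p (x + y)) →
      ∀ x ∈ closure C, ∀ y ∈ closure C, p x ≤ p (x + y)) ∧
    (∃ D : TopOrderedStarSpace Z, D.star = st ∧ D.cone = closure C) := by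
  obtain ⟨ι, hι, q, hinc, hq⟩ := hgen
  have : IsTopologicalAddGroup Z := hq.topologicalAddGroup
  have : ContinuousSMul ℂ Z := hq.continuousSMul
  have hincr : ∀ p : Seminorm ℂ Z, Continuous ⇑p → p.IsIncreasingOn C →
      p.IsIncreasingOn (closure C) := fun p hp h => h.closure hp
  have hincq (i : ι) : (q i).IsIncreasingOn (closure C) :=
    Seminorm.IsIncreasingOn.closure (hinc i) (hq.continuous_seminorm i)
  have hadd : ∀ x ∈ closure C, ∀ y ∈ closure C, x + y ∈ closure C := fun x hx y hy =>
    map_mem_closure₂ continuous_add hx hy hCadd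
  have hsmul : ∀ r : ℝ, 0 ≤ r → ∀ x ∈ closure C, (r : ℂ) • x ∈ closure C := fun r hr x hx =>
    map_mem_closure (continuous_const_smul _) hx (hCsmul r hr)
  have hstar : ∀ x ∈ closure C, st x = x := Set.EqOn.closure hCst hstc continuous_id
  have hstrict : ∀ x ∈ closure C, -x ∈ closure C → x = 0 := fun x hx hnx =>
    hq.eq_zero_of_mem_of_neg_mem hincq hx hnx
  refine ⟨hadd, hsmul, hstar, hstrict, hincr,
    ⟨{ star := st, star_add := st_add, star_smul := st_smul, star_star := st_st,
       cone := closure C, cone_zero := subset_closure hC0, cone_add := hadd,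
       cone_smul := hsmul, cone_strict := hstrict, cone_star := hstar,
       t2 := ht2, star_continuous := hstc, cone_closed := isClosed_closure,
       seminorms_generate := ⟨ι, hι, q, fun i _ _ => (hincq i).le_of_sub_mem, hq⟩ },
      rfl, rfl⟩⟩

/-- Passing to the closure of the (not necessarily closed) cone of a would-be
topologically ordered `*`-space yields a topologically ordered `*`-space. -/
theorem statement0 {Z : Type*} [AddCommGroup Z] [Module ℂ Z] [TopologicalSpace Z]
    (st : Z → Z)
    (st_add : ∀ x y : Z, st (x + y) = st x + st y)
    (st_smul : ∀ (c : ℂ) (x : Z), st (c • x) = (starRingEnd ℂ) c • st x)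
    (st_st : ∀ x : Z, st (st x) = x)
    (C : Set Z)
    (hC0 : (0 : Z) ∈ C)
    (hCadd : ∀ x ∈ C, ∀ y ∈ C, x + y ∈ C)
    (hCsmul : ∀ r : ℝ, 0 ≤ r → ∀ x ∈ C, (r : ℂ) • x ∈ C)
    (hCstrict : ∀ x ∈ C, -x ∈ C → x = 0)
    (hCst : ∀ x ∈ C, st x = x)
    (ht2 : T2Space Z)
    (hstc : Continuous st)
    (hgen : ∃ (ι : Type) (hι : Nonempty ι) (q : ι → Seminorm ℂ Z),
      (∀ i, ∀ x ∈ C, ∀ y ∈ C, q i x ≤ q i (x + y)) ∧ (letI := hι; WithSeminorms q)) :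
    (∀ x ∈ closure C, ∀ y ∈ closure C, x + y ∈ closure C) ∧
    (∀ r : ℝ, 0 ≤ r → ∀ x ∈ closure C, (r : ℂ) • x ∈ closure C) ∧
    (∀ x ∈ closure C, st x = x) ∧
    (∀ x ∈ closure C, -x ∈ closure C → x = 0) ∧
    (∀ p : Seminorm ℂ Z, Continuous ⇑p → (∀ x ∈ C, ∀ y ∈ C, p x ≤ p (x + y)) →
      ∀ x ∈ closure C, ∀ y ∈ closure C, p x ≤ p (x + y)) ∧
    (∃ D : TopOrderedStarSpace Z, D.star = st ∧ D.cone = closure C) :=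
  statement0_general st st_add st_smul st_st C hC0 hCadd hCsmul hCst ht2 hstc hgen
end

section
/- Let E and F be topological VE-spaces over the same topologically ordered *-space Z, let S₀(Z) ⊆ S_*(Z) be a family of continuous increasing *-seminorms generating the topology of Z, and let T : E → F be an adjointable linear operator that is S₀(Z)-bounded. Then its adjoint T* : F → E is S₀(Z)-bounded, and p̄(T*) = p̄(T) for every p ∈ S₀(Z). -/
open scoped ComplexConjugate Topology

/-! For `y : F` put `z = [S y, S y] ∈ Z⁺`. Hahn–Banach for the sublinear functional
`w ↦ inf_{c ≥ 0} p (w + c)` gives a real functional `G ≤ p`, positive on `Z⁺`, with `G z = p z`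
because `p` is increasing. As `[T S y, y] = z` is selfadjoint, Cauchy–Schwarz for the positive
form `G [·,·]` yields `p z ^ 2 ≤ p [T S y, T S y] * p [y, y]`, that is
`p̃ (S y) ^ 2 ≤ p̃ (T S y) * p̃ y ≤ C * p̃ (S y) * p̃ y`. So every bound for `T` is one for `S`;
by symmetry of adjointness the admissible bounds, hence their infima, coincide. -/

namespace PointedCone

variable {V : Type*} [AddCommGroup V] [Module ℝ V] (K : PointedCone ℝ V) (p : Seminorm ℝ V)

/-- Linear functionals below `K.infAdd p` are positive on `K` and dominated by `p`. -/
noncomputable def infAdd (w : V) : ℝ := ⨅ c : K, p (w + c)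

lemma bddBelow_range_seminorm_add (w : V) : BddBelow (Set.range fun c : K => p (w + c)) :=
  ⟨0, by rintro _ ⟨c, rfl⟩; exact apply_nonneg p _⟩

variable {K p}

lemma infAdd_le (w : V) {c : V} (hc : c ∈ K) : K.infAdd p w ≤ p (w + c) :=
  ciInf_le (K.bddBelow_range_seminorm_add p w) ⟨c, hc⟩

lemma le_infAdd {w : V} {r : ℝ} (h : ∀ c ∈ K, r ≤ p (w + c)) : r ≤ K.infAdd p w :=
  le_ciInf fun c => h c c.2

lemma infAdd_nonneg (w : V) : 0 ≤ K.infAdd p w :=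
  le_infAdd fun _ _ => apply_nonneg p _

lemma infAdd_le_self (w : V) : K.infAdd p w ≤ p w := by
  simpa using K.infAdd_le w K.zero_mem

lemma infAdd_neg_nonpos {c : V} (hc : c ∈ K) : K.infAdd p (-c) ≤ 0 := by
  simpa using K.infAdd_le (-c) hc

lemma infAdd_add_le (x y : V) : K.infAdd p (x + y) ≤ K.infAdd p x + K.infAdd p y :=
  le_ciInf_add_ciInf fun c₁ c₂ => calc
    K.infAdd p (x + y) ≤ p (x + c₁ + (y + c₂)) := by
      simpa only [add_add_add_comm] using K.infAdd_le (x + y) (K.add_mem c₁.2 c₂.2)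
    _ ≤ p (x + c₁) + p (y + c₂) := map_add_le_add p _ _

lemma infAdd_smul {t : ℝ} (ht : 0 < t) (w : V) : K.infAdd p (t • w) = t * K.infAdd p w := by
  have hp : ∀ v : V, p (t • v) = t * p v := fun v => by
    rw [map_smul_eq_mul, Real.norm_of_nonneg ht.le]
  apply le_antisymm
  · rw [← div_le_iff₀' ht]
    refine le_infAdd fun c hc => ?_
    rw [div_le_iff₀' ht, ← hp, smul_add]
    exact K.infAdd_le _ (K.smul_mem ht.le hc)
  · refine le_infAdd fun c hc => ?_
    have hc' : t⁻¹ • c ∈ K := K.smul_mem (inv_nonneg.mpr ht.le) hc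
    calc t * K.infAdd p w ≤ t * p (w + t⁻¹ • c) :=
          mul_le_mul_of_nonneg_left (K.infAdd_le w hc') ht.le
      _ = p (t • w + c) := by rw [← hp, smul_add, smul_inv_smul₀ ht.ne']

lemma infAdd_eq_self_of_mem (hp : ∀ x ∈ K, ∀ c ∈ K, p x ≤ p (x + c)) {z : V} (hz : z ∈ K) :
    K.infAdd p z = p z :=
  (infAdd_le_self z).antisymm (le_infAdd (hp z hz))

theorem exists_nonneg_le_seminorm_eq (hp : ∀ x ∈ K, ∀ c ∈ K, p x ≤ p (x + c)) {z : V}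
    (hz : z ∈ K) : ∃ G : V →ₗ[ℝ] ℝ, (∀ c ∈ K, 0 ≤ G c) ∧ (∀ v, G v ≤ p v) ∧ G z = p z := by
  have hker : ∀ t : ℝ, t • z = 0 → (RingHom.id ℝ) t • p z = 0 := fun t h => by
    rcases smul_eq_zero.mp h with rfl | rfl <;> simp
  set f := LinearPMap.mkSpanSingleton' z (p z) hker
  have hf : ∀ x : f.domain, f x ≤ K.infAdd p x := by
    rintro ⟨x, hx⟩
    obtain ⟨t, rfl⟩ := Submodule.mem_span_singleton.mp hx
    rw [LinearPMap.mkSpanSingleton'_apply, RingHom.id_apply, smul_eq_mul]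
    rcases le_or_gt t 0 with ht | ht
    · exact (mul_nonpos_of_nonpos_of_nonneg ht (apply_nonneg p z)).trans (infAdd_nonneg _)
    · rw [infAdd_smul ht, infAdd_eq_self_of_mem hp hz]
  obtain ⟨G, hGf, hG⟩ := exists_extension_of_le_sublinear f (K.infAdd p)
    (fun t ht w => infAdd_smul ht w) infAdd_add_le hf
  refine ⟨G, fun c hc => ?_, fun v => (hG v).trans (infAdd_le_self v), ?_⟩
  · simpa using (hG (-c)).trans (infAdd_neg_nonpos hc)
  · have hzf : z ∈ f.domain := Submodule.mem_span_singleton_self z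
    exact (hGf ⟨z, hzf⟩).trans (LinearPMap.mkSpanSingleton'_apply_self _ _ _ _)

end PointedCone

namespace OrderedStarData

variable {Z : Type*} [AddCommGroup Z] [Module ℂ Z]

def pointedCone (D : OrderedStarData Z) : PointedCone ℝ Z where
  carrier := D.cone
  add_mem' hx hy := D.cone_add _ hx _ hy
  zero_mem' := D.cone_zero
  smul_mem' c _ hx := D.cone_smul c c.2 _ hx

theorem Increasing.le_add {D : OrderedStarData Z} {p : Seminorm ℂ Z} (hp : D.Increasing p) :
    ∀ x ∈ D.pointedCone, ∀ c ∈ D.pointedCone,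
      p.restrictScalars ℝ x ≤ p.restrictScalars ℝ (x + c) :=
  fun x hx c hc => hp x (x + c) hx (by rwa [add_sub_cancel_left])

end OrderedStarData

namespace Gramian

variable {Z : Type*} [AddCommGroup Z] [Module ℂ Z] {D : OrderedStarData Z}
  {E : Type*} [AddCommGroup E] [Module ℂ E]
  {F : Type*} [AddCommGroup F] [Module ℂ F]

theorem inner_add_left (B : Gramian D E) (x₁ x₂ y : E) :
    B.inner (x₁ + x₂) y = B.inner x₁ y + B.inner x₂ y := by
  rw [B.inner_herm, B.inner_add_right, D.star_add, ← B.inner_herm, ← B.inner_herm]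

theorem inner_smul_left (B : Gramian D E) (a : ℂ) (x y : E) :
    B.inner (a • x) y = conj a • B.inner x y := by
  rw [B.inner_herm, B.inner_smul_right, D.star_smul, ← B.inner_herm]

theorem inner_self_add_real_smul (B : Gramian D E) (u v : E) (t : ℝ) :
    B.inner (u + t • v) (u + t • v)
      = B.inner u u + t • (B.inner u v + B.inner v u) + (t * t) • B.inner v v := by
  simp only [← Complex.coe_smul, B.inner_add_right, B.inner_add_left, B.inner_smul_right,
    B.inner_smul_left, Complex.conj_ofReal, smul_add, smul_smul, Complex.ofReal_mul]
  abel

theorem sq_apply_inner_add_inner_le (B : Gramian D E) (G : Z →ₗ[ℝ] ℝ)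
    (hG : ∀ c ∈ D.cone, 0 ≤ G c) (u v : E) :
    G (B.inner u v + B.inner v u) ^ 2 ≤ 4 * G (B.inner u u) * G (B.inner v v) := by
  have h := discrim_le_zero (a := G (B.inner v v)) (b := G (B.inner u v + B.inner v u))
      (c := G (B.inner u u)) fun t : ℝ => by
    have := hG _ (B.inner_self_mem (u + t • v))
    rw [B.inner_self_add_real_smul, map_add, map_add, map_smul, map_smul, smul_eq_mul,
      smul_eq_mul] at this
    linear_combination this
  rw [discrim] at h
  linarith

end Gramian

namespace Gramian.IsAdjoint

variable {Z : Type*} [AddCommGroup Z] [Module ℂ Z] {D : OrderedStarData Z}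
  {E : Type*} [AddCommGroup E] [Module ℂ E]
  {F : Type*} [AddCommGroup F] [Module ℂ F]
  {BE : Gramian D E} {BF : Gramian D F} {T : E →ₗ[ℂ] F} {S : F →ₗ[ℂ] E}

theorem symm (hadj : BE.IsAdjoint BF T S) : BF.IsAdjoint BE S T := fun y x => by
  rw [BE.inner_herm, ← hadj x y, ← BF.inner_herm]

theorem seminorm_inner_le {p : Seminorm ℂ Z} (hp : D.Increasing p)
    (hadj : BE.IsAdjoint BF T S) (y : F) :
    p (BE.inner (S y) (S y)) ≤ BF.tilde p (T (S y)) * BF.tilde p y := by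
  set z := BE.inner (S y) (S y)
  have hz : z ∈ D.cone := BE.inner_self_mem (S y)
  obtain ⟨G, hG_nonneg, hG_le, hGz⟩ :=
    D.pointedCone.exists_nonneg_le_seminorm_eq hp.le_add hz
  have hsum : BF.inner (T (S y)) y + BF.inner y (T (S y)) = (2 : ℝ) • z := by
    rw [BF.inner_herm y, hadj, D.cone_star z hz, two_smul]
  have hCS := BF.sq_apply_inner_add_inner_le G hG_nonneg (T (S y)) y
  rw [hsum, map_smul, smul_eq_mul, hGz] at hCS
  simp only [Seminorm.coe_restrictScalars] at hCS hG_le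
  rw [tilde, tilde, ← Real.sqrt_mul (apply_nonneg p _), Real.le_sqrt (apply_nonneg p _)
    (mul_nonneg (apply_nonneg p _) (apply_nonneg p _))]
  calc p z ^ 2 ≤ G (BF.inner (T (S y)) (T (S y))) * G (BF.inner y y) := by linarith
    _ ≤ p (BF.inner (T (S y)) (T (S y))) * p (BF.inner y y) :=
      mul_le_mul (hG_le _) (hG_le _) (hG_nonneg _ (BF.inner_self_mem y)) (apply_nonneg p _)

theorem tilde_le_of_tilde_le {p : Seminorm ℂ Z} (hp : D.Increasing p)
    (hadj : BE.IsAdjoint BF T S) {C : ℝ} (hC : 0 ≤ C)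
    (hT : ∀ x, BF.tilde p (T x) ≤ C * BE.tilde p x) (y : F) :
    BE.tilde p (S y) ≤ C * BF.tilde p y := by
  have hSy : 0 ≤ BE.tilde p (S y) := Real.sqrt_nonneg _
  rcases hSy.eq_or_lt with h0 | hpos
  · rw [← h0]
    exact mul_nonneg hC (Real.sqrt_nonneg _)
  refine le_of_mul_le_mul_left ?_ hpos
  calc BE.tilde p (S y) * BE.tilde p (S y) = p (BE.inner (S y) (S y)) :=
        Real.mul_self_sqrt (apply_nonneg p _)
    _ ≤ BF.tilde p (T (S y)) * BF.tilde p y := hadj.seminorm_inner_le hp y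
    _ ≤ C * BE.tilde p (S y) * BF.tilde p y :=
        mul_le_mul_of_nonneg_right (hT (S y)) (Real.sqrt_nonneg _)
    _ = BE.tilde p (S y) * (C * BF.tilde p y) := by ring

end Gramian.IsAdjoint

theorem statement2_general {Z E F : Type*} [AddCommGroup Z] [Module ℂ Z] [TopologicalSpace Z]
    [AddCommGroup E] [Module ℂ E]
    [AddCommGroup F] [Module ℂ F]
    (D : TopOrderedStarSpace Z)
    (BE : Gramian D.toOrderedStarData E) (BF : Gramian D.toOrderedStarData F)
    (S₀ : Set (Seminorm ℂ Z)) (hS₀ : ∀ p ∈ S₀, D.MemSStar p)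
    (T : E →ₗ[ℂ] F) (S : F →ₗ[ℂ] E) (hadj : BE.IsAdjoint BF T S)
    (hTb : ∀ p ∈ S₀, BE.BoundedFor BF T p) :
    (∀ p ∈ S₀, BF.BoundedFor BE S p) ∧
    (∀ p ∈ S₀, BF.opSeminorm BE S p = BE.opSeminorm BF T p) := by
  have hinc : ∀ p ∈ S₀, D.Increasing p := fun p hp => (hS₀ p hp).2.1
  refine ⟨fun p hp => ?_, fun p hp => ?_⟩
  · obtain ⟨C, hC, hT⟩ := hTb p hp
    exact ⟨C, hC, hadj.tilde_le_of_tilde_le (hinc p hp) hC hT⟩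
  · refine congr_arg sInf (Set.ext fun C => ⟨?_, ?_⟩)
    · rintro ⟨hC, hS⟩
      exact ⟨hC, hadj.symm.tilde_le_of_tilde_le (hinc p hp) hC hS⟩
    · rintro ⟨hC, hT⟩
      exact ⟨hC, hadj.tilde_le_of_tilde_le (hinc p hp) hC hT⟩

/-- The adjoint of an `S₀`-bounded adjointable operator between topological
VE-spaces is `S₀`-bounded, with the same operator seminorms. -/
theorem statement2 {Z E F : Type*} [AddCommGroup Z] [Module ℂ Z] [TopologicalSpace Z]
    [AddCommGroup E] [Module ℂ E] [TopologicalSpace E]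
    [AddCommGroup F] [Module ℂ F] [TopologicalSpace F]
    (D : TopOrderedStarSpace Z)
    (BE : Gramian D.toOrderedStarData E) (BF : Gramian D.toOrderedStarData F)
    (S₀ : Set (Seminorm ℂ Z)) (hS₀ : ∀ p ∈ S₀, D.MemSStar p)
    (hS₀gen : GeneratesTopology S₀)
    (hE : BE.IsVETopology S₀) (hF : BF.IsVETopology S₀)
    (T : E →ₗ[ℂ] F) (S : F →ₗ[ℂ] E) (hadj : BE.IsAdjoint BF T S)
    (hTb : ∀ p ∈ S₀, BE.BoundedFor BF T p) :
    (∀ p ∈ S₀, BF.BoundedFor BE S p) ∧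
    (∀ p ∈ S₀, BF.opSeminorm BE S p = BE.opSeminorm BF T p) :=
  statement2_general D BE BF S₀ hS₀ T S hadj hTb
end

section
/- Let Z be an admissible space, E a topological VE-space over Z, F a VH-space over Z, and S₀(Z) ⊆ S_*(Z) a generating family of continuous increasing *-seminorms. Then the space L_b(E,F,S₀(Z)) of S₀(Z)-bounded linear operators T : E → F is complete in the locally convex topology given by the seminorms p̄ (p ∈ S₀(Z)): every net of S₀(Z)-bounded operators that is Cauchy with respect to every p̄ converges, in every seminorm p̄, to an S₀(Z)-bounded linear operator. -/
open scoped ComplexConjugate Topology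

/-!
The estimates `p̃ (Tᵢ x - Tⱼ x) ≤ ε p̃ x` make every orbit `(Tᵢ x)ᵢ` a Cauchy net in the complete
space `F`. Since the gramian is definite and `S₀` separates the points of the Hausdorff space `Z`,
the seminorms `p̃` separate the points of `F`, so the pointwise limit `L` is unique, hence linear.
Letting `j → ∞` in `p̃ (Tᵢ x - Tⱼ x) ≤ ε p̃ x` gives the uniform estimate for `Tᵢ - L`, and
`L = Tᵢ - (Tᵢ - L)` inherits the bounds of `Tᵢ`.
-/

open Filter

section UniformLimit

variable {𝕜 E F ι κ : Type*} [NontriviallyNormedField 𝕜] [AddCommGroup E] [Module 𝕜 E]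
  [AddCommGroup F] [Module 𝕜 F] [UniformSpace F] [IsUniformAddGroup F]
  {q : SeminormFamily 𝕜 F κ} [Preorder ι] [Nonempty ι] [IsDirected ι (· ≤ ·)]

theorem WithSeminorms.cauchy_map_atTop (hq : WithSeminorms q) (u : ι → F)
    (hu : ∀ k ε, 0 < ε → ∃ i₀, ∀ i j, i₀ ≤ i → i₀ ≤ j → q k (u i - u j) < ε) :
    Cauchy (map u atTop) := by
  rw [IsUniformAddGroup.cauchy_map_iff_tendsto, hq.tendsto_nhds]
  refine ⟨inferInstance, fun k ε hε => ?_⟩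
  obtain ⟨i₀, hi₀⟩ := hu k ε hε
  filter_upwards [prod_mem_prod (eventually_ge_atTop i₀) (eventually_ge_atTop i₀)] with ij hij
  simpa only [sub_zero] using hi₀ ij.1 ij.2 hij.1 hij.2

theorem WithSeminorms.exists_linearMap_of_uniformCauchy [Nonempty κ] [CompleteSpace F] [T2Space F]
    (hq : WithSeminorms q) (N : κ → E → ℝ) (T : ι → E →ₗ[𝕜] F)
    (hT : ∀ k ε, 0 < ε → ∃ i₀, ∀ i j, i₀ ≤ i → i₀ ≤ j → ∀ x, q k (T i x - T j x) ≤ ε * N k x) :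
    ∃ L : E →ₗ[𝕜] F,
      ∀ k ε, 0 < ε → ∃ i₀, ∀ i, i₀ ≤ i → ∀ x, q k (T i x - L x) ≤ ε * N k x := by
  have hcauchy (x : E) : Cauchy (map (fun i => T i x) atTop) := by
    refine hq.cauchy_map_atTop _ fun k ε hε => ?_
    have hc : 0 < |N k x| + 1 := by positivity
    obtain ⟨i₀, hi₀⟩ := hT k (ε / (|N k x| + 1)) (div_pos hε hc)
    refine ⟨i₀, fun i j hi hj => (hi₀ i j hi hj x).trans_lt ?_⟩
    calc ε / (|N k x| + 1) * N k x ≤ ε / (|N k x| + 1) * |N k x| := by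
          gcongr; exact le_abs_self _
      _ < ε := by
          rw [div_mul_eq_mul_div, div_lt_iff₀ hc]
          linarith
  choose f hf using fun x => cauchy_map_iff_exists_tendsto.1 (hcauchy x)
  have := hq.topologicalAddGroup
  have := hq.continuousSMul
  let L : E →ₗ[𝕜] F := linearMapOfTendsto f T (tendsto_pi_nhds.2 hf)
  refine ⟨L, fun k ε hε => ?_⟩
  obtain ⟨i₀, hi₀⟩ := hT k ε hε
  refine ⟨i₀, fun i hi x => ?_⟩
  have hlim : Tendsto (fun j => q k (T i x - T j x)) atTop (𝓝 (q k (T i x - L x))) :=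
    ((hq.continuous_seminorm k).tendsto _).comp (tendsto_const_nhds.sub (hf x))
  exact le_of_tendsto hlim <| (eventually_ge_atTop i₀).mono fun j hj => hi₀ i j hi hj x

end UniformLimit

namespace Gramian

variable {Z F : Type*} [AddCommGroup Z] [Module ℂ Z] [TopologicalSpace Z] [T2Space Z]
  {D : OrderedStarData Z}
  [AddCommGroup F] [Module ℂ F] [TopologicalSpace F] [IsTopologicalAddGroup F]

theorem IsVETopology.t2Space {B : Gramian D F} {S : Set (Seminorm ℂ Z)}
    (hB : B.IsVETopology S) (hS : GeneratesTopology S) : T2Space F := by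
  obtain ⟨_, q, hq, hwsq⟩ := hB
  obtain ⟨_, hwsS⟩ := hS
  have : T1Space F := hwsq.T1_of_separating fun v hv => by
    obtain ⟨p, hp⟩ := hwsS.separating_of_T1 (B.inner v v) (mt (B.inner_self_eq_zero v) hv)
    refine ⟨p, ?_⟩
    rw [hq, tilde, Real.sqrt_ne_zero (apply_nonneg _ _)]
    exact hp
  infer_instance

end Gramian

theorem statement3_general {Z E F : Type*} [AddCommGroup Z] [Module ℂ Z] [UniformSpace Z]
    [AddCommGroup E] [Module ℂ E]
    [AddCommGroup F] [Module ℂ F] [UniformSpace F] [IsUniformAddGroup F] [CompleteSpace F]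
    (D : TopOrderedStarSpace Z)
    (BE : Gramian D.toOrderedStarData E) (BF : Gramian D.toOrderedStarData F)
    (S₀ : Set (Seminorm ℂ Z))
    (hS₀gen : GeneratesTopology S₀)
    (hF : BF.IsVETopology S₀)
    (ι : Type*) [Nonempty ι] [Preorder ι] [IsDirected ι (· ≤ ·)]
    (T : ι → (E →ₗ[ℂ] F))
    (hTb : ∀ i, ∀ p ∈ S₀, BE.BoundedFor BF (T i) p)
    (hcauchy : ∀ p ∈ S₀, ∀ ε : ℝ, 0 < ε → ∃ i₀ : ι, ∀ i j : ι, i₀ ≤ i → i₀ ≤ j →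
      ∀ x : E, BF.tilde p (T i x - T j x) ≤ ε * BE.tilde p x) :
    ∃ L : E →ₗ[ℂ] F, (∀ p ∈ S₀, BE.BoundedFor BF L p) ∧
      ∀ p ∈ S₀, ∀ ε : ℝ, 0 < ε → ∃ i₀ : ι, ∀ i : ι, i₀ ≤ i →
        ∀ x : E, BF.tilde p (T i x - L x) ≤ ε * BE.tilde p x := by
  have := D.t2
  have := hF.t2Space hS₀gen
  obtain ⟨_, q, hq, hwsq⟩ := hF
  obtain ⟨L, hL⟩ := hwsq.exists_linearMap_of_uniformCauchy (fun p => BE.tilde p.1) T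
    fun p => by simpa only [hq] using hcauchy p.1 p.2
  have hconv : ∀ p ∈ S₀, ∀ ε : ℝ, 0 < ε → ∃ i₀ : ι, ∀ i : ι, i₀ ≤ i →
      ∀ x : E, BF.tilde p (T i x - L x) ≤ ε * BE.tilde p x := fun p hp => by
    simpa only [hq] using hL ⟨p, hp⟩
  refine ⟨L, fun p hp => ?_, hconv⟩
  obtain ⟨i, hi⟩ := hconv p hp 1 one_pos
  obtain ⟨C, hC0, hC⟩ := hTb i p hp
  refine ⟨1 + C, by linarith, fun x => ?_⟩
  calc BF.tilde p (L x) = q ⟨p, hp⟩ (T i x - (T i x - L x)) := by rw [sub_sub_cancel, hq]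
    _ ≤ q ⟨p, hp⟩ (T i x) + q ⟨p, hp⟩ (T i x - L x) := map_sub_le_add _ _ _
    _ ≤ C * BE.tilde p x + 1 * BE.tilde p x := by
        rw [hq, hq]; exact add_le_add (hC x) (hi i le_rfl x)
    _ = (1 + C) * BE.tilde p x := by ring

/-- If `F` is a VH-space over an admissible space `Z`, the space of
`S₀`-bounded operators `E → F` is complete for the operator seminorms `p̄`. -/
theorem statement3 {Z E F : Type*} [AddCommGroup Z] [Module ℂ Z] [UniformSpace Z]
    [IsUniformAddGroup Z] [CompleteSpace Z]
    [AddCommGroup E] [Module ℂ E] [TopologicalSpace E]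
    [AddCommGroup F] [Module ℂ F] [UniformSpace F] [IsUniformAddGroup F] [CompleteSpace F]
    (D : TopOrderedStarSpace Z)
    (BE : Gramian D.toOrderedStarData E) (BF : Gramian D.toOrderedStarData F)
    (S₀ : Set (Seminorm ℂ Z)) (hS₀ : ∀ p ∈ S₀, D.MemSStar p)
    (hS₀gen : GeneratesTopology S₀)
    (hE : BE.IsVETopology S₀) (hF : BF.IsVETopology S₀)
    (ι : Type*) [Nonempty ι] [Preorder ι] [IsDirected ι (· ≤ ·)]
    (T : ι → (E →ₗ[ℂ] F))
    (hTb : ∀ i, ∀ p ∈ S₀, BE.BoundedFor BF (T i) p)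
    (hcauchy : ∀ p ∈ S₀, ∀ ε : ℝ, 0 < ε → ∃ i₀ : ι, ∀ i j : ι, i₀ ≤ i → i₀ ≤ j →
      ∀ x : E, BF.tilde p (T i x - T j x) ≤ ε * BE.tilde p x) :
    ∃ L : E →ₗ[ℂ] F, (∀ p ∈ S₀, BE.BoundedFor BF L p) ∧
      ∀ p ∈ S₀, ∀ ε : ℝ, 0 < ε → ∃ i₀ : ι, ∀ i : ι, i₀ ≤ i →
        ∀ x : E, BF.tilde p (T i x - L x) ≤ ε * BE.tilde p x :=
  statement3_general D BE BF S₀ hS₀gen hF ι T hTb hcauchy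
end

section
/- Let Z be a topologically ordered *-space, p ∈ S_*(Z), and I_p := {z ∈ Z : p(z) = 0}. On the quotient vector space Z_p := Z/I_p: the formula ‖z + I_p‖_p := p(z) is a well-defined norm; the formula (z + I_p)* := z* + I_p is a well-defined conjugate-linear involution that is isometric for ‖·‖_p; the image cone {z + I_p : z ∈ Z⁺} is a convex cone consisting of selfadjoint elements; its closure in the norm topology is a strict convex cone of selfadjoint elements; and the norm ‖·‖_p is increasing with respect to the closed cone, i.e., ‖u‖_p ≤ ‖u + v‖_p whenever u, v lie in the closure of the image cone. Hence Z_p is a normed ordered *-space. -/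
open scoped ComplexConjugate Topology

/-- The quotient `Z_p = Z / I_p` of a topologically ordered `*`-space by the
kernel of `p ∈ S_*(Z)` is a normed ordered `*`-space: the quotient norm and involution are well
defined, the image cone is a convex cone of selfadjoint elements, its (norm-) closure is a strict
convex cone of selfadjoint elements, and the quotient norm is increasing for the closed cone. -/
theorem statement10 {Z : Type*} [AddCommGroup Z] [Module ℂ Z] [TopologicalSpace Z]
    (D : TopOrderedStarSpace Z) (p : Seminorm ℂ Z) (hp : D.MemSStar p) :
    ∃ (Nq : (Z ⧸ semKer p) → ℝ) (st : (Z ⧸ semKer p) → (Z ⧸ semKer p)),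
      -- the norm is well defined : `‖z + I_p‖ = p z`
      (∀ z : Z, Nq (Submodule.Quotient.mk z) = p z) ∧
      -- it is a norm
      (∀ u, 0 ≤ Nq u) ∧
      (∀ u, Nq u = 0 → u = 0) ∧
      (∀ (c : ℂ) (u), Nq (c • u) = ‖c‖ * Nq u) ∧
      (∀ u v, Nq (u + v) ≤ Nq u + Nq v) ∧
      -- the involution is well defined : `(z + I_p)* = z* + I_p`
      (∀ z : Z, st (Submodule.Quotient.mk z) = Submodule.Quotient.mk (D.star z)) ∧
      -- it is a conjugate-linear isometric involution
      (∀ u v, st (u + v) = st u + st v) ∧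
      (∀ (c : ℂ) (u), st (c • u) = (starRingEnd ℂ) c • st u) ∧
      (∀ u, st (st u) = u) ∧
      (∀ u, Nq (st u) = Nq u) ∧
      -- the image cone and its norm-closure
      ∀ Q clQ : Set (Z ⧸ semKer p),
        Q = Submodule.Quotient.mk '' D.cone →
        clQ = {u | ∀ ε : ℝ, 0 < ε → ∃ v ∈ Q, Nq (u - v) < ε} →
        -- the image cone is a convex cone of selfadjoint elements
        (∀ u ∈ Q, ∀ v ∈ Q, u + v ∈ Q) ∧
        (∀ r : ℝ, 0 ≤ r → ∀ u ∈ Q, (r : ℂ) • u ∈ Q) ∧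
        (∀ u ∈ Q, st u = u) ∧
        -- its closure is a strict convex cone of selfadjoint elements
        (∀ u ∈ clQ, ∀ v ∈ clQ, u + v ∈ clQ) ∧
        (∀ r : ℝ, 0 ≤ r → ∀ u ∈ clQ, (r : ℂ) • u ∈ clQ) ∧
        (∀ u ∈ clQ, st u = u) ∧
        (∀ u ∈ clQ, -u ∈ clQ → u = 0) ∧
        -- the quotient norm is increasing for the closed cone
        (∀ u ∈ clQ, ∀ v ∈ clQ, Nq u ≤ Nq (u + v)) := by
  obtain ⟨hcont, hinc, hstar⟩ := hp
  have star_neg : ∀ z : Z, D.star (-z) = -(D.star z) := by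
    intro z
    have h : (-z : Z) = (-1 : ℂ) • z := by simp
    rw [h, D.star_smul]
    simp
  have star_sub : ∀ z w : Z, D.star (z - w) = D.star z - D.star w := by
    intro z w
    rw [sub_eq_add_neg, D.star_add, star_neg, sub_eq_add_neg]
  have key : ∀ z w : Z, z - w ∈ semKer p → p z = p w := by
    intro z w h
    have h0 : p (z - w) = 0 := h
    have h0' : p (w - z) = 0 := by
      have hwz : w - z = -(z - w) := by abel
      rw [hwz, map_neg_eq_map, h0]
    have h1 : p z ≤ p w := by
      calc p z = p (z - w + w) := by rw [sub_add_cancel]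
      _ ≤ p (z - w) + p w := map_add_le_add p _ _
      _ = p w := by rw [h0, zero_add]
    have h2 : p w ≤ p z := by
      calc p w = p (w - z + z) := by rw [sub_add_cancel]
      _ ≤ p (w - z) + p z := map_add_le_add p _ _
      _ = p z := by rw [h0', zero_add]
    exact le_antisymm h1 h2
  set Nq : (Z ⧸ semKer p) → ℝ := fun u => Quotient.liftOn' u (fun z => p z)
    (fun a b h => key a b ((Submodule.Quotient.eq _).mp (Quotient.eq''.mpr h))) with hNqdef
  have hN : ∀ z : Z, Nq (Submodule.Quotient.mk z) = p z := fun z => rfl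
  set st : (Z ⧸ semKer p) → (Z ⧸ semKer p) := fun u => Quotient.liftOn' u
    (fun z => Submodule.Quotient.mk (D.star z))
    (by
      intro a b h
      have hab : a - b ∈ semKer p := (Submodule.Quotient.eq _).mp (Quotient.eq''.mpr h)
      apply (Submodule.Quotient.eq _).mpr
      show p (D.star a - D.star b) = 0
      rw [← star_sub, hstar]
      exact hab) with hstdef
  have hS : ∀ z : Z, st (Submodule.Quotient.mk z) = Submodule.Quotient.mk (D.star z) :=
    fun z => rfl
  have Nnonneg : ∀ u, 0 ≤ Nq u := by
    intro u
    induction u using Quotient.inductionOn' with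
    | h z => exact apply_nonneg p z
  have Nzero : ∀ u, Nq u = 0 → u = 0 := by
    intro u
    induction u using Quotient.inductionOn' with
    | h z =>
      intro h
      exact (Submodule.Quotient.mk_eq_zero _).mpr h
  have Nsmul : ∀ (c : ℂ) (u), Nq (c • u) = ‖c‖ * Nq u := by
    intro c u
    induction u using Quotient.inductionOn' with
    | h z =>
      show Nq (c • Submodule.Quotient.mk z) = ‖c‖ * Nq (Submodule.Quotient.mk z)
      rw [← Submodule.Quotient.mk_smul, hN, hN]
      exact map_smul_eq_mul p c z
  have Nadd : ∀ u v, Nq (u + v) ≤ Nq u + Nq v := by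
    intro u v
    induction u using Quotient.inductionOn' with
    | h z =>
      induction v using Quotient.inductionOn' with
      | h w =>
        show Nq (Submodule.Quotient.mk z + Submodule.Quotient.mk w) ≤
          Nq (Submodule.Quotient.mk z) + Nq (Submodule.Quotient.mk w)
        rw [← Submodule.Quotient.mk_add, hN, hN, hN]
        exact map_add_le_add p z w
  have Nneg : ∀ u, Nq (-u) = Nq u := by
    intro u
    have h := Nsmul (-1) u
    simpa using h
  have stadd : ∀ u v, st (u + v) = st u + st v := by
    intro u v
    induction u using Quotient.inductionOn' with
    | h z =>
      induction v using Quotient.inductionOn' with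
      | h w =>
        show st (Submodule.Quotient.mk z + Submodule.Quotient.mk w) =
          st (Submodule.Quotient.mk z) + st (Submodule.Quotient.mk w)
        rw [← Submodule.Quotient.mk_add, hS, hS, hS, D.star_add, Submodule.Quotient.mk_add]
  have stsmul : ∀ (c : ℂ) (u), st (c • u) = (starRingEnd ℂ) c • st u := by
    intro c u
    induction u using Quotient.inductionOn' with
    | h z =>
      show st (c • Submodule.Quotient.mk z) = (starRingEnd ℂ) c • st (Submodule.Quotient.mk z)
      rw [← Submodule.Quotient.mk_smul, hS, hS, D.star_smul, Submodule.Quotient.mk_smul]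
  have ststar : ∀ u, st (st u) = u := by
    intro u
    induction u using Quotient.inductionOn' with
    | h z =>
      show st (st (Submodule.Quotient.mk z)) = Submodule.Quotient.mk z
      rw [hS, hS, D.star_star]
  have Nst : ∀ u, Nq (st u) = Nq u := by
    intro u
    induction u using Quotient.inductionOn' with
    | h z =>
      show Nq (st (Submodule.Quotient.mk z)) = Nq (Submodule.Quotient.mk z)
      rw [hS, hN, hN, hstar]
  have stsub : ∀ u v, st (u - v) = st u - st v := by
    intro u v
    have h : u - v = u + (-1 : ℂ) • v := by simp [sub_eq_add_neg]
    rw [h, stadd, stsmul]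
    simp [sub_eq_add_neg]
  refine ⟨Nq, st, hN, Nnonneg, Nzero, Nsmul, Nadd, hS, stadd, stsmul, ststar, Nst, ?_⟩
  intro Q clQ hQ hclQ
  subst hQ hclQ
  set Q : Set (Z ⧸ semKer p) := Submodule.Quotient.mk '' D.cone with hQdef
  set clQ : Set (Z ⧸ semKer p) := {u | ∀ ε : ℝ, 0 < ε → ∃ v ∈ Q, Nq (u - v) < ε} with hclQdef
  have Qadd : ∀ u ∈ Q, ∀ v ∈ Q, u + v ∈ Q := by
    rintro _ ⟨x, hx, rfl⟩ _ ⟨y, hy, rfl⟩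
    exact ⟨x + y, D.cone_add x hx y hy, by rw [Submodule.Quotient.mk_add]⟩
  have Qsmul : ∀ r : ℝ, 0 ≤ r → ∀ u ∈ Q, (r : ℂ) • u ∈ Q := by
    rintro r hr _ ⟨x, hx, rfl⟩
    exact ⟨(r : ℂ) • x, D.cone_smul r hr x hx, by rw [Submodule.Quotient.mk_smul]⟩
  have Qstar : ∀ u ∈ Q, st u = u := by
    rintro _ ⟨x, hx, rfl⟩
    rw [hS, D.cone_star x hx]
  have QzeroMem : (0 : Z ⧸ semKer p) ∈ Q :=
    ⟨0, D.cone_zero, Submodule.Quotient.mk_zero _⟩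
  have N0 : Nq 0 = 0 := by
    rw [← Submodule.Quotient.mk_zero (semKer p), hN, map_zero]
  have clQadd : ∀ u ∈ clQ, ∀ v ∈ clQ, u + v ∈ clQ := by
    intro u hu v hv ε hε
    obtain ⟨a, ha, hua⟩ := hu (ε / 2) (by linarith)
    obtain ⟨b, hb, hvb⟩ := hv (ε / 2) (by linarith)
    refine ⟨a + b, Qadd a ha b hb, ?_⟩
    have heq : u + v - (a + b) = (u - a) + (v - b) := by abel
    calc Nq (u + v - (a + b)) = Nq ((u - a) + (v - b)) := by rw [heq]
    _ ≤ Nq (u - a) + Nq (v - b) := Nadd _ _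
    _ < ε := by linarith
  have clQsmul : ∀ r : ℝ, 0 ≤ r → ∀ u ∈ clQ, (r : ℂ) • u ∈ clQ := by
    intro r hr u hu ε hε
    rcases eq_or_lt_of_le hr with hr0 | hrpos
    · refine ⟨0, QzeroMem, ?_⟩
      rw [← hr0]
      simpa [N0] using hε
    · obtain ⟨a, ha, hua⟩ := hu (ε / r) (div_pos hε hrpos)
      refine ⟨(r : ℂ) • a, Qsmul r hr a ha, ?_⟩
      have heq : (r : ℂ) • u - (r : ℂ) • a = (r : ℂ) • (u - a) := by
        rw [smul_sub]
      rw [heq, Nsmul]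
      have hnr : ‖(r : ℂ)‖ = r := by
        rw [Complex.norm_real, Real.norm_eq_abs, abs_of_nonneg hr]
      rw [hnr]
      calc r * Nq (u - a) < r * (ε / r) := (mul_lt_mul_iff_right₀ hrpos).mpr hua
      _ = ε := by field_simp
  have Nle : ∀ u, Nq u ≤ 0 → Nq u = 0 := fun u h => le_antisymm h (Nnonneg u)
  have clQstar : ∀ u ∈ clQ, st u = u := by
    intro u hu
    have hb : ∀ ε : ℝ, 0 < ε → Nq (st u - u) ≤ 0 + ε := by
      intro ε hε
      obtain ⟨a, ha, hua⟩ := hu (ε / 2) (by linarith)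
      have hsa : st a = a := Qstar a ha
      have heq : st u - u = st (u - a) + (a - u) := by
        rw [stsub, hsa]; abel
      have hau : Nq (a - u) = Nq (u - a) := by
        have e : a - u = -(u - a) := by abel
        rw [e, Nneg]
      calc Nq (st u - u) = Nq (st (u - a) + (a - u)) := by rw [heq]
      _ ≤ Nq (st (u - a)) + Nq (a - u) := Nadd _ _
      _ = Nq (u - a) + Nq (u - a) := by rw [Nst, hau]
      _ ≤ 0 + ε := by linarith
    have h0 : Nq (st u - u) ≤ 0 := le_of_forall_pos_le_add hb
    have h1 := Nzero _ (Nle _ h0)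
    exact sub_eq_zero.mp h1
  have Qinc : ∀ u ∈ Q, ∀ v ∈ Q, Nq u ≤ Nq (u + v) := by
    rintro _ ⟨x, hx, rfl⟩ _ ⟨y, hy, rfl⟩
    rw [← Submodule.Quotient.mk_add, hN, hN]
    apply hinc x (x + y) hx
    have h : x + y - x = y := by abel
    rw [h]
    exact hy
  have clQinc : ∀ u ∈ clQ, ∀ v ∈ clQ, Nq u ≤ Nq (u + v) := by
    intro u hu v hv
    have hb : ∀ ε : ℝ, 0 < ε → Nq u ≤ Nq (u + v) + ε := by
      intro ε hε
      obtain ⟨a, ha, hua⟩ := hu (ε / 3) (by linarith)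
      obtain ⟨b, hb', hvb⟩ := hv (ε / 3) (by linarith)
      have na : Nq (a - u) = Nq (u - a) := by
        have e : a - u = -(u - a) := by abel
        rw [e, Nneg]
      have nb : Nq (b - v) = Nq (v - b) := by
        have e : b - v = -(v - b) := by abel
        rw [e, Nneg]
      have h1 : Nq u ≤ Nq a + ε / 3 := by
        have e : a + (u - a) = u := by abel
        calc Nq u = Nq (a + (u - a)) := by rw [e]
        _ ≤ Nq a + Nq (u - a) := Nadd _ _
        _ ≤ Nq a + ε / 3 := by linarith
      have h2 : Nq a ≤ Nq (a + b) := Qinc a ha b hb'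
      have h3 : Nq (a + b) ≤ Nq (u + v) + (ε / 3 + ε / 3) := by
        have e : (u + v) + ((a - u) + (b - v)) = a + b := by abel
        calc Nq (a + b) = Nq ((u + v) + ((a - u) + (b - v))) := by rw [e]
        _ ≤ Nq (u + v) + Nq ((a - u) + (b - v)) := Nadd _ _
        _ ≤ Nq (u + v) + (Nq (a - u) + Nq (b - v)) := by linarith [Nadd (a - u) (b - v)]
        _ ≤ Nq (u + v) + (ε / 3 + ε / 3) := by rw [na, nb] at *; linarith
      linarith
    exact le_of_forall_pos_le_add hb
  have clQstrict : ∀ u ∈ clQ, -u ∈ clQ → u = 0 := by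
    intro u hu hnu
    have h1 : Nq u ≤ Nq (u + -u) := clQinc u hu (-u) hnu
    have h2 : u + -u = 0 := by abel
    rw [h2, N0] at h1
    exact Nzero u (Nle u h1)
  exact ⟨Qadd, Qsmul, Qstar, clQadd, clQsmul, clQstar, clQstrict, clQinc⟩
end

section
/- Let E be a topological VE-space over a topologically ordered *-space Z and p ∈ S_*(Z). Then Ĩ_p := {x ∈ E : p̃(x) = 0} is a closed linear subspace of E, and on the quotient E_p := E/Ĩ_p the formula [x + Ĩ_p, y + Ĩ_p]_p := [x,y] + I_p gives a well-defined gramian with values in the quotient normed ordered *-space Z_p = Z/I_p (with cone the closure of the image of Z⁺), satisfying all VE-space axioms; moreover the associated norm ‖[x + Ĩ_p, x + Ĩ_p]_p‖_p^{1/2} equals the quotient norm p̃(x), so E_p is a normed VE-space over Z_p. -/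
open scoped ComplexConjugate Topology

section Aux11

variable {Z : Type*} [AddCommGroup Z] [Module ℂ Z] {D : OrderedStarData Z}
  {E : Type*} [AddCommGroup E] [Module ℂ E]

namespace OrderedStarData

lemma star_neg' (D : OrderedStarData Z) (x : Z) : D.star (-x) = -D.star x := by
  have h := D.star_smul (-1) x
  simpa using h

lemma star_sub' (D : OrderedStarData Z) (x y : Z) :
    D.star (x - y) = D.star x - D.star y := by
  rw [sub_eq_add_neg, D.star_add, D.star_neg', sub_eq_add_neg]

end OrderedStarData

lemma sem_eq_of (p : Seminorm ℂ Z) (a b : Z) (h : p (a - b) = 0) : p a = p b := by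
  have h1 : p a ≤ p b + p (a - b) := by
    calc p a = p (b + (a - b)) := by congr 1; abel
      _ ≤ p b + p (a - b) := map_add_le_add _ _ _
  have h2 : p b ≤ p a + p (a - b) := by
    calc p b = p (a + (b - a)) := by congr 1; abel
      _ ≤ p a + p (b - a) := map_add_le_add _ _ _
      _ = p a + p (-(a - b)) := by congr 2; abel
      _ = p a + p (a - b) := by rw [map_neg_eq_map]
  linarith

lemma zero_of_bound_aux (v c : ℝ) (hc0 : 0 ≤ c) (hv : 0 ≤ v)
    (bound : ∀ t : ℝ, 0 < t → t * v ≤ 3 * (t ^ 2 * c)) : v = 0 := by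
  by_contra h0
  have hpos : 0 < v := lt_of_le_of_ne hv (Ne.symm h0)
  set t := v / (6 * (c + 1)) with ht0
  have ht : 0 < t := by positivity
  have hb := bound t ht
  have h5 : v ≤ 3 * t * c := by nlinarith [hb, ht]
  have h6 : v = 6 * (t * c) + 6 * t := by
    rw [ht0]; field_simp
  nlinarith [mul_nonneg ht.le hc0, ht]

lemma p_le_three_aux (p : Seminorm ℂ Z) (hinc : D.Increasing p) (a b : Z)
    (h1 : b + a ∈ D.cone) (h2 : b - a ∈ D.cone) : p a ≤ 3 * p b := by
  have key : p (b + a) ≤ p (b + b) := by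
    refine hinc _ _ h1 ?_
    have e : b + b - (b + a) = b - a := by abel
    rw [e]; exact h2
  have h3 : p (b + b) ≤ p b + p b := map_add_le_add p b b
  have h4 : p a ≤ p (b + a) + p b := by
    have e : p a = p (b + a + -b) := by congr 1; abel
    rw [e]
    calc p (b + a + -b) ≤ p (b + a) + p (-b) := map_add_le_add _ _ _
      _ = p (b + a) + p b := by rw [map_neg_eq_map]
  linarith

namespace Gramian

variable (BE : Gramian D E)

lemma inner_add_left' (x y z : E) :
    BE.inner (x + y) z = BE.inner x z + BE.inner y z := by
  rw [BE.inner_herm, BE.inner_add_right, D.star_add, ← BE.inner_herm, ← BE.inner_herm]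

lemma inner_smul_left' (a : ℂ) (x y : E) :
    BE.inner (a • x) y = (starRingEnd ℂ) a • BE.inner x y := by
  rw [BE.inner_herm, BE.inner_smul_right, D.star_smul, ← BE.inner_herm]

lemma inner_sub_left' (x y z : E) :
    BE.inner (x - y) z = BE.inner x z - BE.inner y z := by
  rw [sub_eq_add_neg, BE.inner_add_left', sub_eq_add_neg]
  congr 1
  have h := BE.inner_smul_left' (-1) y z
  simpa using h

lemma inner_sub_right' (x y z : E) :
    BE.inner x (y - z) = BE.inner x y - BE.inner x z := by
  rw [sub_eq_add_neg, BE.inner_add_right, sub_eq_add_neg]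
  congr 1
  have h := BE.inner_smul_right (-1) x z
  simpa using h

lemma inner_zero_left' (y : E) : BE.inner 0 y = 0 := by
  have h := BE.inner_smul_left' 0 0 y
  simpa using h

lemma expand' (a : ℂ) (x y : E) :
    BE.inner (x + a • y) (x + a • y)
      = BE.inner x x + (a • BE.inner x y + (starRingEnd ℂ) a • BE.inner y x)
        + ((starRingEnd ℂ) a * a) • BE.inner y y := by
  rw [BE.inner_add_left']
  rw [BE.inner_add_right, BE.inner_add_right]
  rw [BE.inner_smul_right, BE.inner_smul_left', BE.inner_smul_left', BE.inner_smul_right,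
    smul_smul]
  abel

lemma schwarz_zero (p : Seminorm ℂ Z) (hinc : D.Increasing p)
    (hstar : D.StarSeminorm p) (x y : E) (hx : p (BE.inner x x) = 0) :
    p (BE.inner x y) = 0 := by
  set c := p (BE.inner y y) with hc
  have hc0 : 0 ≤ c := apply_nonneg p _
  have main : ∀ a : ℂ, p (a • BE.inner x y + (starRingEnd ℂ) a • BE.inner y x)
      ≤ 3 * (‖a‖ ^ 2 * c) := by
    intro a
    set s := a • BE.inner x y + (starRingEnd ℂ) a • BE.inner y x with hs
    set b := BE.inner x x + ((starRingEnd ℂ) a * a) • BE.inner y y with hb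
    have h1 : b + s ∈ D.cone := by
      have hmem := BE.inner_self_mem (x + a • y)
      rw [BE.expand'] at hmem
      have e : BE.inner x x + (a • BE.inner x y + (starRingEnd ℂ) a • BE.inner y x)
          + ((starRingEnd ℂ) a * a) • BE.inner y y = b + s := by
        rw [hb, hs]; abel
      rwa [e] at hmem
    have h2 : b - s ∈ D.cone := by
      have hmem := BE.inner_self_mem (x + (-a) • y)
      rw [BE.expand'] at hmem
      have e : BE.inner x x + ((-a) • BE.inner x y + (starRingEnd ℂ) (-a) • BE.inner y x)
          + ((starRingEnd ℂ) (-a) * (-a)) • BE.inner y y = b - s := by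
        simp only [map_neg, neg_smul, neg_mul, mul_neg, neg_neg, hb, hs]
        abel
      rwa [e] at hmem
    have hpb : p b ≤ ‖a‖ ^ 2 * c := by
      calc p b ≤ p (BE.inner x x) + p (((starRingEnd ℂ) a * a) • BE.inner y y) :=
            map_add_le_add _ _ _
        _ = ‖(starRingEnd ℂ) a * a‖ * c := by rw [hx, map_smul_eq_mul, zero_add, hc]
        _ = ‖a‖ ^ 2 * c := by
            rw [norm_mul, RCLike.norm_conj]; ring
    calc p s ≤ 3 * p b := p_le_three_aux p hinc s b h1 h2
      _ ≤ 3 * (‖a‖ ^ 2 * c) := by linarith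
  -- the selfadjoint parts
  set A := BE.inner x y with hA
  set B := BE.inner y x with hB
  set h := A + B with hh
  set k := Complex.I • A - Complex.I • B with hk
  have ph0 : p h = 0 := by
    have bound : ∀ t : ℝ, 0 < t → t * p h ≤ 3 * (t ^ 2 * c) := by
      intro t ht
      have hm := main (t : ℂ)
      have e1 : (t : ℂ) • A + (starRingEnd ℂ) (t : ℂ) • B = (t : ℂ) • h := by
        rw [Complex.conj_ofReal, hh, smul_add]
      rw [e1, map_smul_eq_mul] at hm
      have eN : ‖(t : ℂ)‖ = t := by
        rw [Complex.norm_real, Real.norm_eq_abs, abs_of_pos ht]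
      rw [eN] at hm
      exact hm
    exact zero_of_bound_aux (p h) c hc0 (apply_nonneg _ _) bound
  have pk0 : p k = 0 := by
    have bound : ∀ t : ℝ, 0 < t → t * p k ≤ 3 * (t ^ 2 * c) := by
      intro t ht
      have hm := main ((t : ℂ) * Complex.I)
      have e1 : ((t : ℂ) * Complex.I) • A + (starRingEnd ℂ) ((t : ℂ) * Complex.I) • B
          = (t : ℂ) • k := by
        rw [map_mul, Complex.conj_ofReal, Complex.conj_I, hk, smul_sub, smul_smul, smul_smul,
          mul_neg]
        rw [neg_smul, sub_eq_add_neg]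
      rw [e1, map_smul_eq_mul] at hm
      have eN : ‖(t : ℂ)‖ = t := by
        rw [Complex.norm_real, Real.norm_eq_abs, abs_of_pos ht]
      have eN2 : ‖(t : ℂ) * Complex.I‖ = t := by
        rw [norm_mul, Complex.norm_I, mul_one, eN]
      rw [eN, eN2] at hm
      exact hm
    exact zero_of_bound_aux (p k) c hc0 (apply_nonneg _ _) bound
  have hIk : (-Complex.I) • k = A - B := by
    rw [hk, smul_sub, smul_smul, smul_smul]
    have : -Complex.I * Complex.I = 1 := by
      rw [neg_mul, Complex.I_mul_I, neg_neg]
    rw [this, one_smul, one_smul]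
  have hsum : A + A = h + (-Complex.I) • k := by
    rw [hIk, hh]; abel
  have hAA : p (A + A) = 0 := by
    refine le_antisymm ?_ (apply_nonneg _ _)
    calc p (A + A) = p (h + (-Complex.I) • k) := by rw [hsum]
      _ ≤ p h + p ((-Complex.I) • k) := map_add_le_add _ _ _
      _ = p h + ‖(-Complex.I)‖ * p k := by rw [map_smul_eq_mul]
      _ = 0 := by rw [ph0, pk0]; ring
  have h2A : p ((2 : ℂ) • A) = 2 * p A := by
    rw [map_smul_eq_mul]
    norm_num
  rw [two_smul, hAA] at h2A
  linarith [apply_nonneg p A]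

lemma tilde_eq_zero_iff (p : Seminorm ℂ Z) (x : E) :
    BE.tilde p x = 0 ↔ p (BE.inner x x) = 0 := by
  rw [Gramian.tilde, Real.sqrt_eq_zero']
  exact ⟨fun h => le_antisymm h (apply_nonneg _ _), fun h => le_of_eq h⟩

end Gramian

end Aux11

/-- For a topological VE-space `E` over `Z` and `p ∈ S_*(Z)`, the set
`Ĩ_p = {x : p̃ x = 0}` is a closed linear subspace, and the quotient `E_p = E / Ĩ_p` carries a
well-defined gramian with values in `Z_p = Z / I_p` making it a normed VE-space over `Z_p`,
with the associated norm equal to the quotient norm `p̃`. -/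
theorem statement11 {Z E : Type*} [AddCommGroup Z] [Module ℂ Z] [TopologicalSpace Z]
    [AddCommGroup E] [Module ℂ E] [TopologicalSpace E]
    (D : TopOrderedStarSpace Z) (BE : Gramian D.toOrderedStarData E)
    (hE : BE.IsVETopology {q : Seminorm ℂ Z | D.MemSStar q})
    (p : Seminorm ℂ Z) (hp : D.MemSStar p) :
    ∃ N : Submodule ℂ E, (N : Set E) = {x : E | BE.tilde p x = 0} ∧
      IsClosed (N : Set E) ∧
      ∃ (Nq : (Z ⧸ semKer p) → ℝ) (st : (Z ⧸ semKer p) → (Z ⧸ semKer p))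
        (G : (E ⧸ N) → (E ⧸ N) → (Z ⧸ semKer p)),
        -- the norm and involution of the quotient `Z_p`
        (∀ z : Z, Nq (Submodule.Quotient.mk z) = p z) ∧
        (∀ z : Z, st (Submodule.Quotient.mk z) = Submodule.Quotient.mk (D.star z)) ∧
        -- the gramian is well defined : `[x + Ĩ_p, y + Ĩ_p] = [x,y] + I_p`
        (∀ x y : E, G (Submodule.Quotient.mk x) (Submodule.Quotient.mk y)
            = Submodule.Quotient.mk (BE.inner x y)) ∧
        -- the VE-space axioms for the quotient gramian, over the cone which is the
        -- norm-closure of the image of `Z⁺`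
        (∀ u : E ⧸ N, ∀ ε : ℝ, 0 < ε → ∃ z ∈ D.cone,
            Nq (G u u - Submodule.Quotient.mk z) < ε) ∧
        (∀ u : E ⧸ N, G u u = 0 → u = 0) ∧
        (∀ u v : E ⧸ N, G u v = st (G v u)) ∧
        (∀ u v w : E ⧸ N, G u (v + w) = G u v + G u w) ∧
        (∀ (a : ℂ) (u v : E ⧸ N), G u (a • v) = a • G u v) ∧
        -- the associated norm agrees with the quotient norm `p̃`
        (∀ x : E, Real.sqrt (Nq (G (Submodule.Quotient.mk x) (Submodule.Quotient.mk x)))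
            = BE.tilde p x) := by
  classical
  have hpc : Continuous ⇑p := hp.1
  have hpinc : D.toOrderedStarData.Increasing p := hp.2.1
  have hpstar : D.toOrderedStarData.StarSeminorm p := hp.2.2
  -- Schwarz-type kernel facts
  have sz : ∀ x y : E, p (BE.inner x x) = 0 → p (BE.inner x y) = 0 := fun x y hx =>
    BE.schwarz_zero p hpinc hpstar x y hx
  have sz' : ∀ x y : E, p (BE.inner y y) = 0 → p (BE.inner x y) = 0 := by
    intro x y hy
    rw [BE.inner_herm, hpstar]
    exact sz y x hy
  have memT : ∀ x : E, BE.tilde p x = 0 ↔ p (BE.inner x x) = 0 := fun x =>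
    BE.tilde_eq_zero_iff p x
  -- the submodule
  let N : Submodule ℂ E :=
    { carrier := {x : E | BE.tilde p x = 0}
      add_mem' := by
        intro a b ha hb
        simp only [Set.mem_setOf_eq, memT] at ha hb ⊢
        have e : BE.inner (a + b) (a + b)
            = BE.inner a a + BE.inner a b + BE.inner b a + BE.inner b b := by
          rw [BE.inner_add_left', BE.inner_add_right, BE.inner_add_right]; abel
        refine le_antisymm ?_ (apply_nonneg _ _)
        calc p (BE.inner (a + b) (a + b))
            ≤ p (BE.inner a a + BE.inner a b + BE.inner b a) + p (BE.inner b b) := by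
              rw [e]; exact map_add_le_add _ _ _
          _ ≤ p (BE.inner a a + BE.inner a b) + p (BE.inner b a) + p (BE.inner b b) := by
              gcongr ?_ + _; exact map_add_le_add _ _ _
          _ ≤ p (BE.inner a a) + p (BE.inner a b) + p (BE.inner b a) + p (BE.inner b b) := by
              gcongr ?_ + _ + _; exact map_add_le_add _ _ _
          _ = 0 := by
              rw [ha, hb, sz a b ha, sz' b a ha]; ring
      zero_mem' := by
        simp only [Set.mem_setOf_eq, memT, BE.inner_zero_left', map_zero]
      smul_mem' := by
        intro c x hx
        simp only [Set.mem_setOf_eq, memT] at hx ⊢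
        rw [BE.inner_smul_right, BE.inner_smul_left', smul_smul, map_smul_eq_mul, hx, mul_zero] }
  -- closedness
  have hclosed : IsClosed {x : E | BE.tilde p x = 0} := by
    obtain ⟨hne, q, hq, hwq⟩ := hE
    haveI := hne
    have hcont := hwq.continuous_seminorm ⟨p, hp⟩
    have heq : ⇑(q ⟨p, hp⟩) = fun x : E => BE.tilde p x := funext (hq ⟨p, hp⟩)
    rw [heq] at hcont
    exact isClosed_eq hcont continuous_const
  -- representatives
  have outZ : ∀ u : Z ⧸ semKer p, Submodule.Quotient.mk (Quotient.out u) = u := fun u =>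
    (Submodule.Quotient.mk''_eq_mk _).symm.trans (Quotient.out_eq' u)
  have outE : ∀ u : E ⧸ N, Submodule.Quotient.mk (Quotient.out u) = u := fun u =>
    (Submodule.Quotient.mk''_eq_mk _).symm.trans (Quotient.out_eq' u)
  have mem_semKer : ∀ z : Z, z ∈ semKer p ↔ p z = 0 := fun z => Iff.rfl
  have memN : ∀ x : E, x ∈ N ↔ p (BE.inner x x) = 0 := fun x => memT x
  -- the quotient data
  let Nq : (Z ⧸ semKer p) → ℝ := fun u => p (Quotient.out u)
  let st : (Z ⧸ semKer p) → (Z ⧸ semKer p) := fun u =>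
    Submodule.Quotient.mk (D.star (Quotient.out u))
  let G : (E ⧸ N) → (E ⧸ N) → (Z ⧸ semKer p) := fun u v =>
    Submodule.Quotient.mk (BE.inner (Quotient.out u) (Quotient.out v))
  have hNq : ∀ z : Z, Nq (Submodule.Quotient.mk z) = p z := by
    intro z
    have hmem : Quotient.out (Submodule.Quotient.mk z : Z ⧸ semKer p) - z ∈ semKer p :=
      (Submodule.Quotient.eq _).mp (outZ _)
    exact sem_eq_of p _ z ((mem_semKer _).mp hmem)
  have hst : ∀ z : Z, st (Submodule.Quotient.mk z)
      = Submodule.Quotient.mk (D.star z) := by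
    intro z
    refine (Submodule.Quotient.eq _).mpr ?_
    rw [mem_semKer, ← D.toOrderedStarData.star_sub', hpstar]
    exact (mem_semKer _).mp ((Submodule.Quotient.eq _).mp (outZ _))
  have hG : ∀ x y : E, G (Submodule.Quotient.mk x) (Submodule.Quotient.mk y)
      = Submodule.Quotient.mk (BE.inner x y) := by
    intro x y
    set a := Quotient.out (Submodule.Quotient.mk x : E ⧸ N) with ha
    set b := Quotient.out (Submodule.Quotient.mk y : E ⧸ N) with hb
    have hax : a - x ∈ N := (Submodule.Quotient.eq N).mp (outE _)
    have hby : b - y ∈ N := (Submodule.Quotient.eq N).mp (outE _)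
    refine (Submodule.Quotient.eq _).mpr ?_
    rw [mem_semKer]
    have key : BE.inner a b - BE.inner x y
        = BE.inner (a - x) b + BE.inner x (b - y) := by
      rw [BE.inner_sub_left', BE.inner_sub_right']; abel
    have h1 : p (BE.inner (a - x) b) = 0 := sz _ _ ((memN _).mp hax)
    have h2 : p (BE.inner x (b - y)) = 0 := sz' _ _ ((memN _).mp hby)
    refine le_antisymm ?_ (apply_nonneg _ _)
    calc p (BE.inner a b - BE.inner x y)
        = p (BE.inner (a - x) b + BE.inner x (b - y)) := by rw [key]
      _ ≤ p (BE.inner (a - x) b) + p (BE.inner x (b - y)) := map_add_le_add _ _ _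
      _ = 0 := by rw [h1, h2]; ring
  refine ⟨N, rfl, hclosed, Nq, st, G, hNq, hst, hG, ?_, ?_, ?_, ?_, ?_, ?_⟩
  · -- cone approximation
    intro u ε hε
    refine ⟨BE.inner (Quotient.out u) (Quotient.out u), BE.inner_self_mem _, ?_⟩
    have e : G u u = Submodule.Quotient.mk (BE.inner (Quotient.out u) (Quotient.out u)) := rfl
    rw [e, sub_self]
    have e0 : (0 : Z ⧸ semKer p) = Submodule.Quotient.mk (0 : Z) :=
      (Submodule.Quotient.mk_zero _).symm
    rw [e0, hNq, map_zero]
    exact hε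
  · -- definiteness
    intro u hu
    obtain ⟨x, rfl⟩ := Submodule.Quotient.mk_surjective N u
    rw [hG] at hu
    have hker : BE.inner x x ∈ semKer p := (Submodule.Quotient.mk_eq_zero _).mp hu
    exact (Submodule.Quotient.mk_eq_zero N).mpr ((memN x).mpr ((mem_semKer _).mp hker))
  · -- hermitian
    intro u v
    obtain ⟨x, rfl⟩ := Submodule.Quotient.mk_surjective N u
    obtain ⟨y, rfl⟩ := Submodule.Quotient.mk_surjective N v
    rw [hG, hG, hst, ← BE.inner_herm]
  · -- additivity
    intro u v w
    obtain ⟨x, rfl⟩ := Submodule.Quotient.mk_surjective N u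
    obtain ⟨y, rfl⟩ := Submodule.Quotient.mk_surjective N v
    obtain ⟨z, rfl⟩ := Submodule.Quotient.mk_surjective N w
    rw [← Submodule.Quotient.mk_add, hG, hG, hG, BE.inner_add_right,
      Submodule.Quotient.mk_add]
  · -- homogeneity
    intro a u v
    obtain ⟨x, rfl⟩ := Submodule.Quotient.mk_surjective N u
    obtain ⟨y, rfl⟩ := Submodule.Quotient.mk_surjective N v
    rw [← Submodule.Quotient.mk_smul, hG, hG, BE.inner_smul_right,
      Submodule.Quotient.mk_smul]
  · -- the norm identity
    intro x
    rw [hG, hNq]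
    rfl
end
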